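/- arXiv:1608.01498 — 2 statements merged into one kernel-verified Lean document; each statement's English description precedes it below -/
import Mathlib

section
/- Let n ≥ 3 and let σ : EuclideanSpace ℝ (Fin n) → ℝ be a C² function satisfying the conharmonic equation Δσ(x) = −((n−2)/2)·‖∇σ(x)‖² for all x, and suppose x ↦ ‖∇σ(x)‖ is integrable with respect to Lebesgue measure. Then σ is constant. -/
/-!
Apply the divergence theorem to `∇σ` on the cubes `[-R, R]ⁿ`. Since `Δσ = -c ‖∇σ‖²` with
`c = (n - 2) / 2 > 0`, the integral of `c ‖∇σ‖²` over the cube is minus the flux of `∇σ` through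
its boundary, which is at most the sum of the integrals of `|∂ᵢσ|` over the hyperplanes
`xᵢ = ±R`. By Fubini these hyperplane integrals form an integrable function of `R`, so they are
arbitrarily small for arbitrarily large `R`; hence `∇σ = 0`.
-/

open MeasureTheory

/-- The Euclidean Laplacian: the trace of the second derivative. -/
noncomputable def eLaplacian {n : ℕ} (f : EuclideanSpace ℝ (Fin n) → ℝ)
    (x : EuclideanSpace ℝ (Fin n)) : ℝ :=
  ∑ i, iteratedFDeriv ℝ 2 f x ![EuclideanSpace.single i 1, EuclideanSpace.single i 1]

open Set Filter WithLp

theorem MeasureTheory.Integrable.frequently_atTop_norm_lt {E : Type*} [NormedAddCommGroup E]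
    {G : ℝ → E} (hG : Integrable G) {P : ℝ → Prop} (hP : ∀ᵐ t, P t) {ε : ℝ} (hε : 0 < ε) :
    ∃ᶠ t in atTop, P t ∧ ‖G t‖ < ε := by
  intro hev
  obtain ⟨k, hk⟩ := eventually_atTop.1 hev
  have hIoi : volume (Ioi k) ≤ volume {t | ε ≤ ‖G t‖} := by
    refine measure_mono_ae ?_
    filter_upwards [hP] with t hPt htk
    exact not_lt.1 fun hlt => hk t (le_of_lt htk) ⟨hPt, hlt⟩
  rw [Real.volume_Ioi, top_le_iff] at hIoi
  exact (hG.measure_norm_ge_lt_top hε).ne hIoi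

theorem MeasureTheory.Integrable.comp_insertNth {n : ℕ} {E : Type*} [NormedAddCommGroup E]
    {f : (Fin (n + 1) → ℝ) → E} (hf : Integrable f) (i : Fin (n + 1)) :
    Integrable (fun p : ℝ × (Fin n → ℝ) => f (i.insertNth p.1 p.2)) (volume.prod volume) :=
  ((volume_preserving_piFinSuccAbove (fun _ => ℝ) i).symm _).integrable_comp_of_integrable hf

theorem abs_setIntegral_le_integral_abs {α : Type*} [MeasurableSpace α] {μ : Measure α}
    {g : α → ℝ} (hg : Integrable g μ) (s : Set α) :
    |∫ x in s, g x ∂μ| ≤ ∫ x, |g x| ∂μ :=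
  (abs_integral_le_integral_abs).trans
    (setIntegral_le_integral hg.abs (Eventually.of_forall fun _ => abs_nonneg _))

theorem fderiv_fderiv_apply_eq_iteratedFDeriv_two {𝕜 E F : Type*} [NontriviallyNormedField 𝕜]
    [NormedAddCommGroup E] [NormedSpace 𝕜 E] [NormedAddCommGroup F] [NormedSpace 𝕜 F]
    {σ : E → F} {x : E} (h : DifferentiableAt 𝕜 (fderiv 𝕜 σ) x) (u v : E) :
    fderiv 𝕜 (fun w => fderiv 𝕜 σ w v) x u = iteratedFDeriv 𝕜 2 σ x ![u, v] := by
  rw [fderiv_clm_apply h (differentiableAt_const v), iteratedFDeriv_two_apply]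
  simp

theorem Continuous.eq_zero_of_nonneg_of_setIntegral_Icc_eq_zero {ι : Type*} [Fintype ι]
    {g : (ι → ℝ) → ℝ} (hg : Continuous g) (hnonneg : ∀ x, 0 ≤ g x)
    (hzero : ∀ r, ∫ x in Icc (fun _ => -r) (fun _ => r), g x = 0) (x : ι → ℝ) : g x = 0 := by
  set r := ‖x‖ + 1
  have hball : Metric.ball (0 : ι → ℝ) r ⊆ Icc (fun _ => -r) (fun _ => r) := fun y hy =>
    have hyr : ∀ i, |y i| ≤ r := fun i => (norm_le_pi_norm y i).trans (mem_ball_zero_iff.1 hy).le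
    ⟨fun i => (abs_le.1 (hyr i)).1, fun i => (abs_le.1 (hyr i)).2⟩
  have hae : g =ᵐ[volume.restrict (Icc (fun _ => -r) (fun _ => r))] 0 :=
    (setIntegral_eq_zero_iff_of_nonneg_ae (Eventually.of_forall hnonneg)
      hg.integrableOn_Icc).1 (hzero r)
  exact Measure.eqOn_open_of_ae_eq (ae_restrict_of_ae_restrict_of_subset hball hae)
    Metric.isOpen_ball hg.continuousOn continuousOn_const (mem_ball_zero_iff.2 (lt_add_one _))

section Divergence

variable {n : ℕ} {f : Fin (n + 1) → (Fin (n + 1) → ℝ) → ℝ}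
  {f' : Fin (n + 1) → (Fin (n + 1) → ℝ) → (Fin (n + 1) → ℝ) →L[ℝ] ℝ}

theorem abs_setIntegral_Icc_divergence_le (hf : ∀ i x, HasFDerivAt (f i) (f' i x) x)
    (hdiv : Continuous fun x => ∑ i, f' i x (Pi.single i 1))
    {a b : Fin (n + 1) → ℝ} (hab : a ≤ b)
    (hb : ∀ i, Integrable fun y => f i (i.insertNth (b i) y))
    (ha : ∀ i, Integrable fun y => f i (i.insertNth (a i) y)) :
    |∫ x in Icc a b, ∑ i, f' i x (Pi.single i 1)| ≤
      ∑ i, ((∫ y, |f i (i.insertNth (b i) y)|) + ∫ y, |f i (i.insertNth (a i) y)|) := by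
  rw [integral_divergence_of_hasFDerivAt_off_countable' a b hab f f' ∅ countable_empty
    (fun i => (continuous_iff_continuousAt.2 fun x => (hf i x).continuousAt).continuousOn)
    (fun x _ i => hf i x) hdiv.integrableOn_Icc]
  refine (Finset.abs_sum_le_sum_abs _ _).trans (Finset.sum_le_sum fun i _ => ?_)
  exact (abs_sub _ _).trans (add_le_add (abs_setIntegral_le_integral_abs (hb i) _)
    (abs_setIntegral_le_integral_abs (ha i) _))

theorem divergence_eq_zero_of_integrable_of_nonpos (hf : ∀ i x, HasFDerivAt (f i) (f' i x) x)
    (hint : ∀ i, Integrable (f i)) (hdiv : Continuous fun x => ∑ i, f' i x (Pi.single i 1))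
    (hnonpos : ∀ x, ∑ i, f' i x (Pi.single i 1) ≤ 0) (x : Fin (n + 1) → ℝ) :
    ∑ i, f' i x (Pi.single i 1) = 0 := by
  set D : (Fin (n + 1) → ℝ) → ℝ := fun x => ∑ i, f' i x (Pi.single i 1)
  -- `G R` bounds the flux of `f` through the boundary of `[-R, R]ⁿ⁺¹`
  set G : ℝ → ℝ := fun t =>
    ∑ i, ((∫ y, |f i (i.insertNth t y)|) + ∫ y, |f i (i.insertNth (-t) y)|)
  have hG : Integrable G := integrable_finsetSum _ fun i _ =>
    have hi := ((hint i).comp_insertNth i).abs.integral_prod_left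
    hi.add hi.comp_neg
  have hslices : ∀ᵐ t, ∀ i, Integrable (fun y => f i (i.insertNth t y)) ∧
      Integrable (fun y => f i (i.insertNth (-t) y)) := by
    have hpos := ae_all_iff.2 fun i => ((hint i).comp_insertNth i).prod_right_ae
    filter_upwards [hpos, (Measure.measurePreserving_neg volume).quasiMeasurePreserving.ae hpos]
      with t ht htneg i using ⟨ht i, htneg i⟩
  have hcube : ∀ r, ∫ x in Icc (fun _ => -r) (fun _ => r), -D x = 0 := by
    intro r
    refine le_antisymm (le_of_forall_pos_lt_add fun ε hε => ?_)
      (setIntegral_nonneg measurableSet_Icc fun x _ => neg_nonneg.2 (hnonpos x))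
    obtain ⟨R, ⟨hR, hGR⟩, habsR⟩ :=
      ((hG.frequently_atTop_norm_lt hslices hε).and_eventually (eventually_ge_atTop |r|)).exists
    have hrR : r ≤ R := (le_abs_self r).trans habsR
    have hRR : (fun _ => -R : Fin (n + 1) → ℝ) ≤ fun _ => R :=
      fun _ => neg_le_self ((abs_nonneg r).trans habsR)
    calc ∫ x in Icc (fun _ => -r) (fun _ => r), -D x
        ≤ ∫ x in Icc (fun _ => -R) (fun _ => R), -D x :=
          setIntegral_mono_set hdiv.neg.integrableOn_Icc
            (Eventually.of_forall fun x => neg_nonneg.2 (hnonpos x))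
            (Icc_subset_Icc (fun _ => neg_le_neg hrR) fun _ => hrR).eventuallyLE
      _ ≤ |∫ x in Icc (fun _ => -R) (fun _ => R), D x| := by
          rw [integral_neg]; exact neg_le_abs _
      _ ≤ G R := abs_setIntegral_Icc_divergence_le hf hdiv hRR
          (fun i => (hR i).1) fun i => (hR i).2
      _ < 0 + ε := by rw [zero_add]; exact (le_abs_self _).trans_lt hGR
  exact neg_eq_zero.1 (hdiv.neg.eq_zero_of_nonneg_of_setIntegral_Icc_eq_zero
    (fun x => neg_nonneg.2 (hnonpos x)) hcube x)

end Divergence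

theorem norm_fderiv_eq_norm_gradient {E : Type*} [NormedAddCommGroup E] [InnerProductSpace ℝ E]
    [CompleteSpace E] (σ : E → ℝ) (x : E) : ‖fderiv ℝ σ x‖ = ‖gradient σ x‖ := by
  rw [← toDual_gradient, LinearIsometryEquiv.norm_map]

theorem gradient_eq_zero_of_eLaplacian_eq_neg_mul_norm_sq {m : ℕ}
    {σ : EuclideanSpace ℝ (Fin (m + 1)) → ℝ} (hσ : ContDiff ℝ 2 σ) {c : ℝ} (hc : 0 < c)
    (hΔ : ∀ x, eLaplacian σ x = -c * ‖gradient σ x‖ ^ 2)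
    (hgrad : Integrable fun x => ‖gradient σ x‖) (x : EuclideanSpace ℝ (Fin (m + 1))) :
    gradient σ x = 0 := by
  have hDσ : Differentiable ℝ (fderiv ℝ σ) := (hσ.fderiv_right le_rfl).differentiable one_ne_zero
  set e : Fin (m + 1) → EuclideanSpace ℝ (Fin (m + 1)) := fun i => EuclideanSpace.single i 1
  set f : Fin (m + 1) → (Fin (m + 1) → ℝ) → ℝ := fun i y => fderiv ℝ σ (toLp 2 y) (e i)
  set f' : Fin (m + 1) → (Fin (m + 1) → ℝ) → (Fin (m + 1) → ℝ) →L[ℝ] ℝ := fun i y =>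
    (fderiv ℝ (fun w => fderiv ℝ σ w (e i)) (toLp 2 y)).comp
      (PiLp.continuousLinearEquiv 2 ℝ _).symm.toContinuousLinearMap
  have hf : ∀ i y, HasFDerivAt (f i) (f' i y) y := fun i y =>
    ((hDσ.clm_apply (differentiable_const _)) _).hasFDerivAt.comp y (PiLp.hasFDerivAt_toLp 2 y)
  have hdiv : ∀ y, ∑ i, f' i y (Pi.single i 1) = -c * ‖gradient σ (toLp 2 y)‖ ^ 2 := fun y => by
    rw [← hΔ, eLaplacian]
    refine Finset.sum_congr rfl fun i _ => fderiv_fderiv_apply_eq_iteratedFDeriv_two (hDσ _) _ _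
  have hDσc : Continuous (fderiv ℝ σ) := hσ.continuous_fderiv two_ne_zero
  have hcont : Continuous fun y => -c * ‖gradient σ (toLp 2 y)‖ ^ 2 :=
    continuous_const.mul ((((InnerProductSpace.toDual ℝ _).symm.continuous.comp hDσc).comp
      (PiLp.continuous_toLp 2 _)).norm.pow 2)
  have hint : ∀ i, Integrable (f i) := fun i =>
    ((PiLp.volume_preserving_toLp (Fin (m + 1))).integrable_comp_of_integrable hgrad).mono'
      ((hDσc.clm_apply continuous_const).comp (PiLp.continuous_toLp 2 _)).aestronglyMeasurable
      (Eventually.of_forall fun y => calc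
        ‖f i y‖ ≤ ‖fderiv ℝ σ (toLp 2 y)‖ * ‖e i‖ := (fderiv ℝ σ _).le_opNorm _
        _ = ‖gradient σ (toLp 2 y)‖ := by
          rw [norm_fderiv_eq_norm_gradient, PiLp.norm_single, norm_one, mul_one])
  have h := divergence_eq_zero_of_integrable_of_nonpos hf hint (by simpa only [hdiv] using hcont)
    (fun y => (hdiv y).trans_le (by nlinarith [hc])) (ofLp x)
  rw [hdiv, toLp_ofLp] at h
  simpa [hc.ne'] using h

theorem conharmonic_L1_gradient_constant
    {n : ℕ} (hn : 3 ≤ n) (σ : EuclideanSpace ℝ (Fin n) → ℝ)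
    (hC2 : ContDiff ℝ 2 σ)
    (hconh : ∀ x, eLaplacian σ x = -(((n : ℝ) - 2) / 2) * ‖gradient σ x‖ ^ 2)
    (hgrad : Integrable (fun x => ‖gradient σ x‖) volume) :
    ∃ c : ℝ, ∀ x, σ x = c := by
  obtain ⟨m, rfl⟩ : ∃ m, n = m + 1 := ⟨n - 1, by omega⟩
  have hc : (0 : ℝ) < (((m + 1 : ℕ) : ℝ) - 2) / 2 := by
    have : (3 : ℝ) ≤ ((m + 1 : ℕ) : ℝ) := by exact_mod_cast hn
    linarith
  have hfderiv : ∀ x, fderiv ℝ σ x = 0 := fun x => by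
    rw [← toDual_gradient,
      gradient_eq_zero_of_eLaplacian_eq_neg_mul_norm_sq hC2 hc hconh hgrad x, map_zero]
  exact ⟨σ 0, fun x => is_const_of_fderiv_eq_zero (hC2.differentiable two_ne_zero) hfderiv x 0⟩
end

section
/- Let n ≥ 4 and let λ : EuclideanSpace ℝ (Fin n) → ℝ be a C² function with λ(x) > 0 for all x, satisfying the equation 2·λ(x)·Δλ(x) = (n−4)·‖∇λ(x)‖² for all x, and suppose ∫ λ^p < ∞ for some real p with 1 < p < ∞. Then λ is constant. -/
open MeasureTheory

/-!
With `u = λ ^ p`, the chain rule and the conharmonic equation give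
`Δu = p ((n - 4) / 2 + p - 1) λ ^ (p - 2) ‖∇λ‖² ≥ 0`, so `u` is a nonnegative integrable
subharmonic function. Testing `Δu ≥ 0` against the cutoffs `φ_R = ψ(· / R)` and integrating by
parts twice gives `∫_{B_r} Δu ≤ ∫ u Δφ_R ≤ C R⁻² ∫ u → 0`, hence `Δu = 0`, which forces `∇λ = 0`.
-/

open InnerProductSpace Laplacian Metric Filter Topology
open scoped Gradient

section SecondDerivatives

variable {E F : Type*} [NormedAddCommGroup E] [NormedSpace ℝ E] [NormedAddCommGroup F]
  [NormedSpace ℝ F]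

theorem ContDiff.differentiable_fderiv {f : E → F} (hf : ContDiff ℝ 2 f) :
    Differentiable ℝ (fderiv ℝ f) :=
  (hf.fderiv_right (m := 1) (by norm_num)).differentiable one_ne_zero

theorem ContDiff.continuous_fderiv_fderiv_apply {f : E → F} (hf : ContDiff ℝ 2 f) (v w : E) :
    Continuous fun x => fderiv ℝ (fderiv ℝ f) x v w := by
  have := (hf.fderiv_right (m := 1) (by norm_num)).continuous_fderiv one_ne_zero
  fun_prop

theorem fderiv_fderiv_apply_const {f : E → F} {x : E} (h : DifferentiableAt ℝ (fderiv ℝ f) x)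
    (v w : E) : fderiv ℝ (fun y => fderiv ℝ f y w) x v = fderiv ℝ (fderiv ℝ f) x v w := by
  simp [fderiv_clm_apply h (differentiableAt_const w)]

end SecondDerivatives

section Laplacian

variable {E : Type*} [NormedAddCommGroup E] [InnerProductSpace ℝ E] [FiniteDimensional ℝ E]

theorem laplacian_eq_sum_fderiv_fderiv {ι : Type*} [Fintype ι] (b : OrthonormalBasis ι ℝ E)
    (f : E → ℝ) (x : E) : Δ f x = ∑ i, fderiv ℝ (fderiv ℝ f) x (b i) (b i) := by
  simp [laplacian_eq_iteratedFDeriv_orthonormalBasis f b, iteratedFDeriv_two_apply]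

theorem ContDiff.continuous_laplacian {f : E → ℝ} (hf : ContDiff ℝ 2 f) : Continuous (Δ f) := by
  rw [funext (laplacian_eq_sum_fderiv_fderiv (stdOrthonormalBasis ℝ E) f)]
  exact continuous_finsetSum _ fun i _ => hf.continuous_fderiv_fderiv_apply _ _

theorem HasCompactSupport.laplacian {f : E → ℝ} (hf : HasCompactSupport f) :
    HasCompactSupport (Δ f) := by
  refine hf.mono' fun x hx => ?_
  by_contra h
  have h0 : Δ f =ᶠ[𝓝 x] Δ (fun _ : E => (0 : ℝ)) :=
    laplacian_congr_nhds (notMem_tsupport_iff_eventuallyEq.1 h)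
  exact hx (by simpa using h0.eq_of_nhds)

theorem laplacian_comp_smul {f : E → ℝ} (hf : ContDiff ℝ 2 f) (c : ℝ) (x : E) :
    Δ (fun y => f (c • y)) x = c ^ 2 * Δ f (c • x) := by
  let b := stdOrthonormalBasis ℝ E
  have hcomp := (c • ContinuousLinearMap.id ℝ E).iteratedFDeriv_comp_right hf x (i := 2) le_rfl
  simp only [laplacian_eq_iteratedFDeriv_orthonormalBasis _ b, Finset.mul_sum]
  refine Finset.sum_congr rfl fun i _ => ?_
  rw [show (fun y => f (c • y)) = f ∘ (c • ContinuousLinearMap.id ℝ E) from rfl, hcomp,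
    ContinuousMultilinearMap.compContinuousLinearMap_apply]
  convert (iteratedFDeriv ℝ 2 f (c • x)).map_smul_univ (fun _ => c) ![b i, b i] using 1
  · rfl
  · rw [Finset.prod_const, Finset.card_univ, Fintype.card_fin, smul_eq_mul]

theorem sum_sq_fderiv_apply_eq_norm_gradient_sq {ι : Type*} [Fintype ι]
    (b : OrthonormalBasis ι ℝ E) (f : E → ℝ) (x : E) :
    ∑ i, fderiv ℝ f x (b i) ^ 2 = ‖∇ f x‖ ^ 2 := by
  have h : ∀ v, fderiv ℝ f x v = (inner ℝ (∇ f x) v : ℝ) := fun v => toDual_symm_apply.symm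
  calc ∑ i, fderiv ℝ f x (b i) ^ 2 = ∑ i, inner ℝ (∇ f x) (b i) * inner ℝ (b i) (∇ f x) := by
        refine Finset.sum_congr rfl fun i _ => ?_
        rw [h, sq, real_inner_comm (∇ f x)]
    _ = ‖∇ f x‖ ^ 2 := by rw [b.sum_inner_mul_inner, real_inner_self_eq_norm_sq]

theorem laplacian_comp {f : E → ℝ} {g g' g'' : ℝ → ℝ} (hf : ContDiff ℝ 2 f)
    (hg : ∀ y, HasDerivAt g (g' (f y)) (f y)) {x : E} (hg' : HasDerivAt g' (g'' (f x)) (f x)) :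
    Δ (g ∘ f) x = g' (f x) * Δ f x + g'' (f x) * ‖∇ f x‖ ^ 2 := by
  have hf1 := hf.differentiable two_ne_zero
  have hD : fderiv ℝ (g ∘ f) = fun y => g' (f y) • fderiv ℝ f y :=
    funext fun y => ((hg y).comp_hasFDerivAt y (hf1 y).hasFDerivAt).fderiv
  have hD2 : HasFDerivAt (fun y => g' (f y) • fderiv ℝ f y) _ x :=
    (hg'.comp_hasFDerivAt x (hf1 x).hasFDerivAt).smul (hf.differentiable_fderiv x).hasFDerivAt
  let b := stdOrthonormalBasis ℝ E
  rw [laplacian_eq_sum_fderiv_fderiv b, laplacian_eq_sum_fderiv_fderiv b,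
    ← sum_sq_fderiv_apply_eq_norm_gradient_sq b, hD, hD2.fderiv, Finset.mul_sum, Finset.mul_sum,
    ← Finset.sum_add_distrib]
  refine Finset.sum_congr rfl fun i _ => ?_
  simp
  ring

theorem laplacian_rpow {f : E → ℝ} (hf : ContDiff ℝ 2 f) (hpos : ∀ x, 0 < f x) (p : ℝ) (x : E) :
    Δ (fun y => f y ^ p) x
      = p * f x ^ (p - 1) * Δ f x + p * (p - 1) * f x ^ (p - 2) * ‖∇ f x‖ ^ 2 := by
  have hg'' : HasDerivAt (fun t => p * t ^ (p - 1)) (p * (p - 1) * f x ^ (p - 2)) (f x) := by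
    have := (Real.hasDerivAt_rpow_const (p := p - 1) (Or.inl (hpos x).ne')).const_mul p
    rwa [sub_sub, one_add_one_eq_two, ← mul_assoc] at this
  exact laplacian_comp (g := fun t => t ^ p) (g'' := fun t => p * (p - 1) * t ^ (p - 2)) hf
    (fun y => Real.hasDerivAt_rpow_const (Or.inl (hpos y).ne')) hg''

end Laplacian

section Cutoff

variable {E : Type*} [NormedAddCommGroup E] [InnerProductSpace ℝ E] [FiniteDimensional ℝ E]

noncomputable def scaledBump (R : ℝ) (x : E) : ℝ :=
  (⟨1, 2, one_pos, one_lt_two⟩ : ContDiffBump (0 : E)) (R⁻¹ • x)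

theorem contDiff_scaledBump {k : ℕ∞} (R : ℝ) : ContDiff ℝ k (scaledBump (E := E) R) :=
  (ContDiffBump.contDiff _).comp (contDiff_const_smul R⁻¹)

theorem hasCompactSupport_scaledBump {R : ℝ} (hR : R ≠ 0) :
    HasCompactSupport (scaledBump (E := E) R) :=
  ContDiffBump.hasCompactSupport _ |>.comp_smul (inv_ne_zero hR)

theorem scaledBump_nonneg (R : ℝ) (x : E) : 0 ≤ scaledBump R x :=
  ContDiffBump.nonneg _

theorem scaledBump_eq_one {R : ℝ} (hR : 0 < R) {x : E} (hx : ‖x‖ ≤ R) : scaledBump R x = 1 := by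
  refine ContDiffBump.one_of_mem_closedBall _ ?_
  rw [mem_closedBall_zero_iff, norm_smul, norm_inv, Real.norm_of_nonneg hR.le]
  exact inv_mul_le_one_of_le₀ hx hR.le

theorem exists_abs_laplacian_scaledBump_le :
    ∃ C, ∀ (R : ℝ) (x : E), |Δ (scaledBump (E := E) R) x| ≤ C / R ^ 2 := by
  let ψ : ContDiffBump (0 : E) := ⟨1, 2, one_pos, one_lt_two⟩
  obtain ⟨C, hC⟩ := ψ.hasCompactSupport.laplacian.exists_bound_of_continuous
    (ψ.contDiff (n := 2)).continuous_laplacian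
  refine ⟨C, fun R x => ?_⟩
  rw [show scaledBump R = fun y => ψ (R⁻¹ • y) from rfl, laplacian_comp_smul ψ.contDiff,
    abs_mul, abs_of_nonneg (sq_nonneg _), inv_pow, div_eq_inv_mul]
  exact mul_le_mul_of_nonneg_left (hC _) (by positivity)

end Cutoff

theorem eq_zero_of_setIntegral_closedBall_nonpos {X : Type*} [MetricSpace X] [ProperSpace X]
    [MeasurableSpace X] [OpensMeasurableSpace X] (μ : Measure X) [IsFiniteMeasureOnCompacts μ]
    [μ.IsOpenPosMeasure] {f : X → ℝ} (hf : Continuous f) (hf0 : 0 ≤ f) (x₀ : X)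
    (h : ∀ r : ℝ, ∫ x in closedBall x₀ r, f x ∂μ ≤ 0) : f = 0 := by
  have hball : ∀ n : ℕ, f =ᵐ[μ.restrict (closedBall x₀ n)] 0 := fun n =>
    (setIntegral_eq_zero_iff_of_nonneg_ae (.of_forall hf0)
      (hf.continuousOn.integrableOn_compact (isCompact_closedBall _ _))).1
      (le_antisymm (h n) (setIntegral_nonneg measurableSet_closedBall fun x _ => hf0 x))
  have hae : f =ᵐ[μ] 0 := by
    rw [← Measure.restrict_univ (μ := μ), ← iUnion_closedBall_nat x₀]
    exact (ae_restrict_iUnion_iff _ _).2 hball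
  exact (hf.ae_eq_iff_eq μ continuous_const).1 hae

section Integration

variable {E : Type*} [NormedAddCommGroup E] [InnerProductSpace ℝ E] [FiniteDimensional ℝ E]
  [MeasurableSpace E] [BorelSpace E] (μ : Measure E) [μ.IsAddHaarMeasure]

theorem integral_mul_fderiv_fderiv_eq_of_hasCompactSupport {u φ : E → ℝ} (hu : ContDiff ℝ 2 u)
    (hφ : ContDiff ℝ 2 φ) (hφc : HasCompactSupport φ) (v : E) :
    ∫ x, u x * fderiv ℝ (fderiv ℝ φ) x v v ∂μ = ∫ x, fderiv ℝ (fderiv ℝ u) x v v * φ x ∂μ := by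
  have hDu : Continuous fun x => fderiv ℝ u x v := by
    have := hu.continuous_fderiv two_ne_zero; fun_prop
  have hDφ : Continuous fun x => fderiv ℝ φ x v := by
    have := hφ.continuous_fderiv two_ne_zero; fun_prop
  have hDφc : HasCompactSupport fun x => fderiv ℝ φ x v := hφc.fderiv_apply ℝ v
  have hD2φc : HasCompactSupport fun x => fderiv ℝ (fderiv ℝ φ) x v v :=
    (hφc.fderiv ℝ).fderiv ℝ |>.comp_left (g := fun L : E →L[ℝ] E →L[ℝ] ℝ => L v v) rfl
  calc ∫ x, u x * fderiv ℝ (fderiv ℝ φ) x v v ∂μ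
      = ∫ x, u x * fderiv ℝ (fun y => fderiv ℝ φ y v) x v ∂μ := by
        simp only [fderiv_fderiv_apply_const (hφ.differentiable_fderiv _)]
    _ = -∫ x, fderiv ℝ u x v * fderiv ℝ φ x v ∂μ := by
        refine integral_mul_fderiv_eq_neg_fderiv_mul_of_integrable ?_ ?_ ?_
          (fun x _ => hu.differentiable two_ne_zero x)
          (fun x _ => hφ.differentiable_fderiv x |>.clm_apply (differentiableAt_const v))
        · exact (hDu.mul hDφ).integrable_of_hasCompactSupport hDφc.mul_left
        · simp only [fderiv_fderiv_apply_const (hφ.differentiable_fderiv _)]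
          exact (hu.continuous.mul (hφ.continuous_fderiv_fderiv_apply v v)
            ).integrable_of_hasCompactSupport hD2φc.mul_left
        · exact (hu.continuous.mul hDφ).integrable_of_hasCompactSupport hDφc.mul_left
    _ = ∫ x, fderiv ℝ (fun y => fderiv ℝ u y v) x v * φ x ∂μ := by
        rw [integral_mul_fderiv_eq_neg_fderiv_mul_of_integrable, neg_neg]
        · simp only [fderiv_fderiv_apply_const (hu.differentiable_fderiv _)]
          exact ((hu.continuous_fderiv_fderiv_apply v v).mul hφ.continuous
            ).integrable_of_hasCompactSupport hφc.mul_left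
        · exact (hDu.mul hDφ).integrable_of_hasCompactSupport hDφc.mul_left
        · exact (hDu.mul hφ.continuous).integrable_of_hasCompactSupport hφc.mul_left
        · exact fun x _ => hu.differentiable_fderiv x |>.clm_apply (differentiableAt_const v)
        · exact fun x _ => hφ.differentiable two_ne_zero x
    _ = ∫ x, fderiv ℝ (fderiv ℝ u) x v v * φ x ∂μ := by
        simp only [fderiv_fderiv_apply_const (hu.differentiable_fderiv _)]

theorem integral_mul_laplacian_eq_of_hasCompactSupport {u φ : E → ℝ} (hu : ContDiff ℝ 2 u)
    (hφ : ContDiff ℝ 2 φ) (hφc : HasCompactSupport φ) :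
    ∫ x, u x * Δ φ x ∂μ = ∫ x, Δ u x * φ x ∂μ := by
  let b := stdOrthonormalBasis ℝ E
  have hD2φc : ∀ i, HasCompactSupport fun x => fderiv ℝ (fderiv ℝ φ) x (b i) (b i) := fun i =>
    (hφc.fderiv ℝ).fderiv ℝ |>.comp_left (g := fun L : E →L[ℝ] E →L[ℝ] ℝ => L (b i) (b i)) rfl
  simp only [laplacian_eq_sum_fderiv_fderiv b, Finset.mul_sum, Finset.sum_mul]
  rw [integral_finsetSum, integral_finsetSum]
  · exact Finset.sum_congr rfl fun i _ =>
      integral_mul_fderiv_fderiv_eq_of_hasCompactSupport μ hu hφ hφc (b i)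
  · exact fun i _ => ((hu.continuous_fderiv_fderiv_apply _ _).mul hφ.continuous
      ).integrable_of_hasCompactSupport hφc.mul_left
  · exact fun i _ => (hu.continuous.mul (hφ.continuous_fderiv_fderiv_apply _ _)
      ).integrable_of_hasCompactSupport (hD2φc i).mul_left

theorem setIntegral_closedBall_laplacian_le {u : E → ℝ} (hu : ContDiff ℝ 2 u) (hu0 : 0 ≤ u)
    (hui : Integrable u μ) (hΔ : 0 ≤ Δ u) {C R r : ℝ}
    (hC : ∀ x, |Δ (scaledBump (E := E) R) x| ≤ C / R ^ 2) (hR : 0 < R) (hrR : r ≤ R) :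
    ∫ x in closedBall 0 r, Δ u x ∂μ ≤ C / R ^ 2 * ∫ x, u x ∂μ := by
  let φ := scaledBump (E := E) R
  have hφ : ContDiff ℝ 2 φ := contDiff_scaledBump R
  have hφc : HasCompactSupport φ := hasCompactSupport_scaledBump hR.ne'
  calc ∫ x in closedBall 0 r, Δ u x ∂μ = ∫ x in closedBall 0 r, Δ u x * φ x ∂μ :=
        setIntegral_congr_fun measurableSet_closedBall fun x hx => by
          rw [show φ x = 1 from scaledBump_eq_one hR ((mem_closedBall_zero_iff.1 hx).trans hrR),
            mul_one]
    _ ≤ ∫ x, Δ u x * φ x ∂μ :=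
        setIntegral_le_integral ((hu.continuous_laplacian.mul hφ.continuous
          ).integrable_of_hasCompactSupport hφc.mul_left)
          (.of_forall fun x => mul_nonneg (hΔ x) (scaledBump_nonneg R x))
    _ = ∫ x, u x * Δ φ x ∂μ := (integral_mul_laplacian_eq_of_hasCompactSupport μ hu hφ hφc).symm
    _ ≤ ∫ x, C / R ^ 2 * u x ∂μ := by
        refine integral_mono ((hu.continuous.mul hφ.continuous_laplacian
          ).integrable_of_hasCompactSupport hφc.laplacian.mul_left) (hui.const_mul _) fun x => ?_
        rw [mul_comm (C / R ^ 2)]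
        exact mul_le_mul_of_nonneg_left ((le_abs_self _).trans (hC x)) (hu0 x)
    _ = C / R ^ 2 * ∫ x, u x ∂μ := integral_const_mul _ _

theorem laplacian_eq_zero_of_nonneg_of_integrable {u : E → ℝ} (hu : ContDiff ℝ 2 u)
    (hu0 : 0 ≤ u) (hui : Integrable u μ) (hΔ : 0 ≤ Δ u) : Δ u = 0 := by
  obtain ⟨C, hC⟩ := exists_abs_laplacian_scaledBump_le (E := E)
  have hlim : Tendsto (fun R : ℝ => C / R ^ 2 * ∫ x, u x ∂μ) atTop (𝓝 0) := by
    simpa using (tendsto_const_nhds.div_atTop (tendsto_pow_atTop two_ne_zero)).mul_const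
      (∫ x, u x ∂μ)
  refine eq_zero_of_setIntegral_closedBall_nonpos μ hu.continuous_laplacian hΔ 0 fun r =>
    ge_of_tendsto hlim (eventually_atTop.2 ⟨max r 1, fun R hR => ?_⟩)
  exact setIntegral_closedBall_laplacian_le μ hu hu0 hui hΔ (hC R)
    (one_pos.trans_le ((le_max_right r 1).trans hR)) ((le_max_left r 1).trans hR)

end Integration

theorem eLaplacian_eq_laplacian {n : ℕ} (f : EuclideanSpace ℝ (Fin n) → ℝ) :
    eLaplacian f = Δ f := by
  ext x
  simp [eLaplacian,
    laplacian_eq_iteratedFDeriv_orthonormalBasis f (EuclideanSpace.basisFun (Fin n) ℝ)]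

theorem conharmonic_Lp_constant
    {n : ℕ} (hn : 4 ≤ n) (l : EuclideanSpace ℝ (Fin n) → ℝ)
    (hC2 : ContDiff ℝ 2 l)
    (hpos : ∀ x, 0 < l x)
    (hconh : ∀ x, 2 * l x * eLaplacian l x = ((n : ℝ) - 4) * ‖gradient l x‖ ^ 2)
    (p : ℝ) (hp : 1 < p)
    (hLp : Integrable (fun x => l x ^ p) volume) :
    ∃ c : ℝ, ∀ x, l x = c := by
  have hk : 0 < p * (((n : ℝ) - 4) / 2 + (p - 1)) := by
    have : (4 : ℝ) ≤ n := by exact_mod_cast hn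
    have : 0 < p := by linarith
    positivity
  have hΔ : ∀ x, Δ (fun y => l y ^ p) x
      = p * (((n : ℝ) - 4) / 2 + (p - 1)) * (l x ^ (p - 2) * ‖∇ l x‖ ^ 2) := fun x => by
    have hl : l x ^ (p - 1) = l x ^ (p - 2) * l x := by
      rw [← Real.rpow_add_one (hpos x).ne']; ring_nf
    rw [laplacian_rpow hC2 hpos, hl, ← eLaplacian_eq_laplacian]
    linear_combination (p * l x ^ (p - 2) / 2) * hconh x
  have hΔ0 := laplacian_eq_zero_of_nonneg_of_integrable volume
    (hC2.rpow_const_of_ne fun x => (hpos x).ne') (fun x => (Real.rpow_pos_of_pos (hpos x) p).le)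
    hLp fun x => by
      rw [hΔ]; have := Real.rpow_pos_of_pos (hpos x) (p - 2); positivity
  have hgrad : ∀ x, fderiv ℝ l x = 0 := fun x => by
    have h0 := congrFun hΔ0 x
    rw [hΔ, Pi.zero_apply] at h0
    simpa [hk.ne', (Real.rpow_pos_of_pos (hpos x) (p - 2)).ne', gradient] using h0
  exact ⟨l 0, fun x => is_const_of_fderiv_eq_zero (hC2.differentiable two_ne_zero) hgrad x 0⟩
end
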